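/- arXiv:math/9907170 — 2 statements merged into one kernel-verified Lean document; each statement's English description precedes it below -/
import Mathlib

section
/- With â₊ = multiplication by α and â₋ = d/dα on ℂ[[α]], the deformed operators of U_λ(h₆) satisfy [N, B₋] = −2B₋ − λA₋N and [B₋, B₊] = 2(1 + e^{−λA₊})N + 2M − 2λA₋B₊, where N = ((e^{λα}−1)/λ) d/dα, A₊ = α, A₋ = e^{λα} d/dα, M = 1, B₊ = ((1−e^{−λα})/λ)², B₋ = e^{λα} d²/dα². -/
open PowerSeries

noncomputable section

/-- Formal differentiation `d/dα` as a linear operator on `ℂ⟦α⟧`. -/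
def Dop : Module.End ℂ (PowerSeries ℂ) := (PowerSeries.derivative ℂ).toLinearMap

/-- Multiplication by a fixed formal power series, as a linear operator. -/
def mulOp (s : PowerSeries ℂ) : Module.End ℂ (PowerSeries ℂ) := LinearMap.mulLeft ℂ s

lemma derivative_rescale_exp (a : ℂ) :
    PowerSeries.derivative ℂ (rescale a (exp ℂ)) = a • rescale a (exp ℂ) := by
  ext n
  simp only [coeff_derivative, coeff_rescale, coeff_exp, map_smul, smul_eq_mul,
    Nat.factorial_succ, one_div, map_inv₀, map_natCast, Nat.cast_mul, Nat.cast_add, Nat.cast_one,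
    mul_inv]
  have h1 : ((n:ℂ)+1) ≠ 0 := Nat.cast_add_one_ne_zero n
  have h2 : ((n.factorial :ℂ)) ≠ 0 := Nat.cast_ne_zero.mpr n.factorial_ne_zero
  simp only [map_inv₀, map_add, map_mul, map_natCast, map_one]
  field_simp
  ring

lemma exp_rescale_mul_neg (a : ℂ) :
    rescale a (exp ℂ) * rescale (-a) (exp ℂ) = 1 := by
  rw [PowerSeries.exp_mul_exp_eq_exp_add]
  simp [rescale_zero]

/-- The deformed operators `N = ((e^{λα}−1)/λ) d/dα`, `A₊ = α·`,
`A₋ = e^{λα} d/dα`, `M = 1`, `B₊ = ((1−e^{−λα})/λ)²·`, `B₋ = e^{λα} d²/dα²`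
of `U_λ(h₆)` satisfy `[N,B₋] = −2B₋ − λA₋N` and
`[B₋,B₊] = 2(1 + e^{−λA₊})N + 2M − 2λA₋B₊`. -/
theorem deformed_two_photon_NBm_BmBp (lam : ℂ) (hlam : lam ≠ 0) :
    let eP : PowerSeries ℂ := rescale lam (exp ℂ)      -- e^{λα}
    let eM : PowerSeries ℂ := rescale (-lam) (exp ℂ)   -- e^{−λα}
    let N := mulOp (lam⁻¹ • (eP - 1)) * Dop
    let Am := mulOp eP * Dop
    let M : Module.End ℂ (PowerSeries ℂ) := 1
    let Bp := mulOp ((lam⁻¹ • (1 - eM)) ^ 2)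
    let Bm := mulOp eP * (Dop * Dop)
    ⁅N, Bm⁆ = -(2 • Bm) - lam • (Am * N) ∧
    ⁅Bm, Bp⁆ = 2 • ((1 + mulOp eM) * N) + 2 • M - (2 * lam) • (Am * Bp) := by
  intro eP eM N Am M Bp Bm
  have heP : PowerSeries.derivative ℂ eP = lam • eP := derivative_rescale_exp lam
  have heM : PowerSeries.derivative ℂ eM = (-lam) • eM := derivative_rescale_exp (-lam)
  have hPM : eP * eM = 1 := exp_rescale_mul_neg lam
  have hinv : (C (R := ℂ) lam) * (C (R := ℂ) lam⁻¹) = 1 := by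
    rw [← map_mul, mul_inv_cancel₀ hlam, map_one]
  constructor
  · apply LinearMap.ext; intro f
    simp only [Ring.lie_def, N, Bm, Am, M, Bp, mulOp, Dop, LinearMap.sub_apply,
      LinearMap.add_apply, LinearMap.neg_apply, LinearMap.smul_apply, Module.End.mul_apply,
      Module.End.one_apply, LinearMap.mulLeft_apply, Derivation.coeFn_coe,
      Derivation.leibniz, map_smul, map_sub, map_add, Derivation.map_one_eq_zero,
      heP, heM, smul_sub, smul_add, smul_smul, pow_two, smul_eq_C_mul, smul_eq_mul,
      PowerSeries.derivative_C, map_neg, map_mul, map_ofNat, mul_zero, zero_mul, smul_zero, map_zero]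
    ring_nf
    linear_combination (norm := ring_nf)
      (-2 * eP * (PowerSeries.derivative ℂ (PowerSeries.derivative ℂ f))) * hinv
  · apply LinearMap.ext; intro f
    simp only [Ring.lie_def, N, Bm, Am, M, Bp, mulOp, Dop, LinearMap.sub_apply,
      LinearMap.add_apply, LinearMap.neg_apply, LinearMap.smul_apply, Module.End.mul_apply,
      Module.End.one_apply, LinearMap.mulLeft_apply, Derivation.coeFn_coe,
      Derivation.leibniz, map_smul, map_sub, map_add, Derivation.map_one_eq_zero,
      heP, heM, smul_sub, smul_add, smul_smul, pow_two, smul_eq_C_mul, smul_eq_mul,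
      PowerSeries.derivative_C, map_neg, map_mul, map_ofNat, mul_zero, zero_mul, smul_zero, map_zero]
    ring_nf
    linear_combination (norm := ring_nf)
      ((-2 * C (R := ℂ) lam⁻¹ * PowerSeries.derivative ℂ f
        + 2 * (C (R := ℂ) lam)^2 * (C (R := ℂ) lam⁻¹)^2 * f
        - 2 * eM * C (R := ℂ) lam * (C (R := ℂ) lam⁻¹)^2 * PowerSeries.derivative ℂ f) * hPM
      + (2 * f + 2 * C (R := ℂ) lam * C (R := ℂ) lam⁻¹ * f
        - 2 * eM * C (R := ℂ) lam⁻¹ * PowerSeries.derivative ℂ f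
        + 2 * eP * C (R := ℂ) lam⁻¹ * PowerSeries.derivative ℂ f) * hinv)

end
end

section
/- In the deformed one-boson realization N = ((e^{2λα²}−1)/(2λα)) d/dα, A₊ = ((1−e^{−2λα²})/(2λ))^{1/2}, A₋ = (e^{2λα²}/α)((1−e^{−2λα²})/(2λ))^{1/2} d/dα, M = 1, the undeformed oscillator relations hold: [N,A₊] = A₊, [N,A₋] = −A₋, and [A₋,A₊] = M. -/
open PowerSeries

noncomputable section

/-- The formal power series `e^{cα²} = ∑ₖ cᵏ α^{2k}/k!`. -/
def expSq (c : ℂ) : PowerSeries ℂ :=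
  PowerSeries.mk fun n => if 2 ∣ n then c ^ (n / 2) / (Nat.factorial (n / 2)) else 0

/-- Formal division by `α` (valid when applied to series with zero constant
term). -/
def divX (f : PowerSeries ℂ) : PowerSeries ℂ :=
  PowerSeries.mk fun n => PowerSeries.coeff (n + 1) f

/-!
Write `e = e^{2λα²}`. Differentiating `s² = (1 - e⁻¹)/(2λ)` gives `s s' = α e⁻¹`, so the
coefficient `m = e s/α` of `A₋` is `1/s'`; this is `[A₋, A₊] = 1`. Moreover
`e s² = (e - 1)/(2λ)`, so the coefficient of `N` is `s m`, i.e. `N = A₊ A₋`. In any ring,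
`[a, b] = 1` implies `[b a, b] = b` and `[b a, a] = -a`.
-/

section Ring

variable {R : Type*} [Ring R] {a b : R}

theorem lie_mul_left_self_of_lie_eq_one (h : ⁅a, b⁆ = 1) : ⁅b * a, b⁆ = b := by
  rw [Ring.lie_def] at h ⊢
  calc b * a * b - b * (b * a) = b * (a * b - b * a) := by noncomm_ring
    _ = b := by rw [h, mul_one]

theorem lie_mul_right_self_of_lie_eq_one (h : ⁅a, b⁆ = 1) : ⁅b * a, a⁆ = -a := by
  rw [Ring.lie_def] at h ⊢
  calc b * a * a - a * (b * a) = -((a * b - b * a) * a) := by noncomm_ring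
    _ = -a := by rw [h, one_mul]

end Ring

theorem mulOp_mul (f g : ℂ⟦X⟧) : mulOp (f * g) = mulOp f * mulOp g :=
  LinearMap.mulLeft_mul _ _ f g

theorem mulOp_one : mulOp 1 = 1 :=
  LinearMap.mulLeft_one ℂ ℂ⟦X⟧

theorem lie_mulOp_mul_Dop_mulOp (f g : ℂ⟦X⟧) :
    ⁅mulOp f * Dop, mulOp g⁆ = mulOp (f * d⁄dX ℂ g) := by
  ext h : 1
  simp only [Ring.lie_def, LinearMap.sub_apply, Module.End.mul_apply, mulOp, Dop,
    LinearMap.mulLeft_apply, Derivation.coeFn_coe, Derivation.leibniz, smul_eq_mul]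
  ring

theorem X_mul_divX {f : ℂ⟦X⟧} (h : constantCoeff f = 0) : X * divX f = f := by
  ext (_ | n)
  · simpa using h.symm
  · simp [coeff_succ_X_mul, divX]

theorem constantCoeff_expSq (c : ℂ) : constantCoeff (expSq c) = 1 := by
  simp [expSq, ← coeff_zero_eq_constantCoeff_apply]

theorem derivative_expSq (c : ℂ) : d⁄dX ℂ (expSq c) = (2 * c) • (X * expSq c) := by
  ext (_ | n)
  · simp [expSq, coeff_derivative]
  rw [coeff_derivative, coeff_smul, coeff_succ_X_mul, smul_eq_mul]
  obtain ⟨k, rfl | rfl⟩ := Nat.even_or_odd' n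
  · have hk : (2 * k + 1 + 1) / 2 = k + 1 := by omega
    simp only [expSq, coeff_mk, hk, Nat.dvd_mul_right, if_true,
      show 2 ∣ 2 * k + 1 + 1 from ⟨k + 1, by ring⟩, Nat.mul_div_cancel_left k two_pos,
      Nat.factorial_succ]
    have hfact : (k.factorial : ℂ) ≠ 0 := Nat.cast_ne_zero.mpr k.factorial_ne_zero
    have hsucc : (k : ℂ) + 1 ≠ 0 := Nat.cast_add_one_ne_zero k
    field_simp
    push_cast
    ring
  · simp [expSq, show ¬ 2 ∣ 2 * k + 1 + 1 + 1 by omega, show ¬ 2 ∣ 2 * k + 1 by omega]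

theorem expSq_mul_expSq_neg (c : ℂ) : expSq c * expSq (-c) = 1 := by
  apply derivative.ext
  · simp only [Derivation.leibniz, derivative_expSq, derivative_one, smul_eq_mul, smul_eq_C_mul,
      mul_neg, map_neg]
    ring
  · simp [constantCoeff_expSq]

section Realization

variable {lam : ℂ} {s : ℂ⟦X⟧} (hs : s ^ 2 = (2 * lam)⁻¹ • (1 - expSq (-(2 * lam))))
include hs

theorem constantCoeff_eq_zero_of_sq_eq : constantCoeff s = 0 := by
  have h := congrArg constantCoeff hs
  simp only [map_pow, smul_eq_C_mul, map_mul, map_sub, map_one, constantCoeff_expSq, sub_self,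
    mul_zero] at h
  exact pow_eq_zero_iff two_ne_zero |>.mp h

theorem mul_derivative_eq_of_sq_eq (hlam : lam ≠ 0) :
    s * d⁄dX ℂ s = X * expSq (-(2 * lam)) := by
  have h := congrArg (d⁄dX ℂ) hs
  simp only [derivative_pow, Derivation.map_smul, map_sub, derivative_one, zero_sub,
    derivative_expSq, smul_neg, smul_smul] at h
  rw [show (2 * lam)⁻¹ * (2 * -(2 * lam)) = -2 by field_simp] at h
  simp only [Nat.cast_ofNat, Nat.add_one_sub_one, pow_one, neg_smul, neg_neg, two_smul] at h
  apply smul_right_injective ℂ⟦X⟧ (two_ne_zero (α := ℂ))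
  simp only [two_smul]
  linear_combination h

theorem divX_expSq_mul_mul_derivative (hlam : lam ≠ 0) :
    divX (expSq (2 * lam) * s) * d⁄dX ℂ s = 1 := by
  apply mul_left_cancel₀ (X_ne_zero (R := ℂ))
  rw [← mul_assoc, X_mul_divX (by simp [constantCoeff_eq_zero_of_sq_eq hs]), mul_assoc,
    mul_derivative_eq_of_sq_eq hs hlam, mul_left_comm, expSq_mul_expSq_neg]

theorem smul_divX_expSq_sub_one :
    (2 * lam)⁻¹ • divX (expSq (2 * lam) - 1) = s * divX (expSq (2 * lam) * s) := by
  apply mul_left_cancel₀ (X_ne_zero (R := ℂ))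
  rw [mul_smul_comm, X_mul_divX (by simp [constantCoeff_expSq]), mul_left_comm,
    X_mul_divX (by simp [constantCoeff_eq_zero_of_sq_eq hs]), mul_left_comm, ← sq, hs,
    mul_smul_comm, mul_sub, mul_one, expSq_mul_expSq_neg]

end Realization

theorem deformed_realization_undeformed_oscillator_relations_general
    (lam : ℂ) (hlam : lam ≠ 0) (s : PowerSeries ℂ)
    (hs : s ^ 2 = (2 * lam)⁻¹ • (1 - expSq (-(2 * lam)))) :
    let e2 : PowerSeries ℂ := expSq (2 * lam)  -- e^{2λα²}
    let N := mulOp ((2 * lam)⁻¹ • divX (e2 - 1)) * Dop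
    let Ap := mulOp s
    let Am := mulOp (divX (e2 * s)) * Dop
    let M : Module.End ℂ (PowerSeries ℂ) := 1
    ⁅N, Ap⁆ = Ap ∧ ⁅N, Am⁆ = -Am ∧ ⁅Am, Ap⁆ = M := by
  intro e2 N Ap Am M
  have hN : N = Ap * Am := by
    simp only [N, Ap, Am, e2, smul_divX_expSq_sub_one hs, mulOp_mul, mul_assoc]
  have hcomm : ⁅Am, Ap⁆ = 1 := by
    rw [lie_mulOp_mul_Dop_mulOp, divX_expSq_mul_mul_derivative hs hlam, mulOp_one]
  rw [hN]
  exact ⟨lie_mul_left_self_of_lie_eq_one hcomm, lie_mul_right_self_of_lie_eq_one hcomm, hcomm⟩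

/-- In the type III deformed one-boson realization, with
`s = ((1−e^{−2λα²})/(2λ))^{1/2}` (the branch whose lowest term is `α`), the
operators `N = ((e^{2λα²}−1)/(2λα)) d/dα`, `A₊ = s·`,
`A₋ = (e^{2λα²} s/α) d/dα`, `M = 1` satisfy the undeformed oscillator
relations `[N,A₊] = A₊`, `[N,A₋] = −A₋`, `[A₋,A₊] = M`. -/
theorem deformed_realization_undeformed_oscillator_relations
    (lam : ℂ) (hlam : lam ≠ 0) (s : PowerSeries ℂ)
    (hs : s ^ 2 = (2 * lam)⁻¹ • (1 - expSq (-(2 * lam))))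
    (hs1 : PowerSeries.coeff 1 s = 1) :
    let e2 : PowerSeries ℂ := expSq (2 * lam)  -- e^{2λα²}
    let N := mulOp ((2 * lam)⁻¹ • divX (e2 - 1)) * Dop
    let Ap := mulOp s
    let Am := mulOp (divX (e2 * s)) * Dop
    let M : Module.End ℂ (PowerSeries ℂ) := 1
    ⁅N, Ap⁆ = Ap ∧ ⁅N, Am⁆ = -Am ∧ ⁅Am, Ap⁆ = M :=
  deformed_realization_undeformed_oscillator_relations_general lam hlam s hs

end
end
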